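/- arXiv:2301.06970 — 9 statements merged into one kernel-verified Lean document; each statement's English description precedes it below -/
import Mathlib

section
/- For every nonzero rational q and every nonzero rational r, q = (r^2 q + 1/(3r))^3 - ((27 r^9 q^3 - 9 r^3 q + 1)/(3r(9 r^6 q^2 - 3 r^3 q + 1)))^3 - ((3 r^2 q (3 r^3 q - 1))/(9 r^6 q^2 - 3 r^3 q + 1))^3. In particular, every rational number is a sum of three rational cubes in infinitely many ways. -/
/-!
With `x = r³q` the denominator `9x² - 3x + 1` is positive (four times it is `(6x - 1)² + 3`), so
the identity is a polynomial identity after clearing denominators. Each value of the first cube root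
`r²q + 1/(3r)` is attained by at most three nonzero `r`, namely roots of `3qr³ - 3cr + 1`, so the
infinitely many nonzero `r` give infinitely many representations.
-/

open Polynomial

section Field

variable {K : Type*} [Field K]

theorem three_cubes_identity (h3 : (3 : K) ≠ 0) (q r : K) (hr : r ≠ 0)
    (hD : 9*r^6*q^2 - 3*r^3*q + 1 ≠ 0) :
    q = (r^2*q + 1/(3*r))^3
        - ((27*r^9*q^3 - 9*r^3*q + 1)/(3*r*(9*r^6*q^2 - 3*r^3*q + 1)))^3
        - ((3*r^2*q*(3*r^3*q - 1))/(9*r^6*q^2 - 3*r^3*q + 1))^3 := by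
  -- hide the denominator, which `field_simp` would otherwise expand past `hD`
  generalize hD_def : 9*r^6*q^2 - 3*r^3*q + 1 = D at hD ⊢
  field_simp
  subst hD_def
  ring

theorem finite_setOf_cubic_eq_zero (a b : K) : {x : K | a*x^3 + b*x + 1 = 0}.Finite := by
  have hp : (C a * X^3 + C b * X + 1 : K[X]) ≠ 0 := fun h => by
    simpa using congrArg (coeff · 0) h
  convert finite_setOfPred_isRoot hp using 1
  simp

theorem finite_preimage_sq_mul_add_inv (h3 : (3 : K) ≠ 0) (q c : K) :
    ((fun r : K => r^2*q + 1/(3*r)) ⁻¹' {c}).Finite := by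
  refine ((finite_setOf_cubic_eq_zero (3*q) (-3*c)).insert 0).subset fun r hr => ?_
  rcases eq_or_ne r 0 with rfl | hr0
  · exact Set.mem_insert 0 _
  · refine Set.mem_insert_of_mem 0 ?_
    simp only [Set.mem_preimage, Set.mem_singleton_iff] at hr
    simp only [Set.mem_ofPred_eq, ← hr]
    field_simp
    ring

end Field

theorem three_cubes_denom_pos {K : Type*} [Field K] [LinearOrder K] [IsStrictOrderedRing K]
    (q r : K) : 0 < 9*r^6*q^2 - 3*r^3*q + 1 := by
  nlinarith [sq_nonneg (6*r^3*q - 1)]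

theorem stmt_2 :
    (∀ q r : ℚ, q ≠ 0 → r ≠ 0 →
      q = (r^2*q + 1/(3*r))^3
          - ((27*r^9*q^3 - 9*r^3*q + 1)/(3*r*(9*r^6*q^2 - 3*r^3*q + 1)))^3
          - ((3*r^2*q*(3*r^3*q - 1))/(9*r^6*q^2 - 3*r^3*q + 1))^3) ∧
    (∀ q : ℚ, {t : ℚ × ℚ × ℚ | t.1^3 + t.2.1^3 + t.2.2^3 = q}.Infinite) := by
  have identity (q r : ℚ) (hr : r ≠ 0) :=
    three_cubes_identity three_ne_zero q r hr (three_cubes_denom_pos q r).ne'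
  refine ⟨fun q r _ hr => identity q r hr, fun q hfin => ?_⟩
  have hcover : {r : ℚ | r ≠ 0} ⊆ (fun r : ℚ => r^2*q + 1/(3*r)) ⁻¹'
      (Prod.fst '' {t : ℚ × ℚ × ℚ | t.1^3 + t.2.1^3 + t.2.2^3 = q}) :=
    fun r hr => ⟨(_, -((27*r^9*q^3 - 9*r^3*q + 1)/(3*r*(9*r^6*q^2 - 3*r^3*q + 1))),
      -((3*r^2*q*(3*r^3*q - 1))/(9*r^6*q^2 - 3*r^3*q + 1))),
      by simp only [Set.mem_ofPred_eq]; linear_combination -identity q r hr, rfl⟩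
  have hfin' := ((hfin.image Prod.fst).preimage' fun c _ =>
    finite_preimage_sq_mul_add_inv three_ne_zero q c).subset hcover
  exact (Set.finite_singleton (0 : ℚ)).infinite_compl hfin'
end

section
/- Let q > 3 be a prime and 0 < a < q an integer. Then the plane curve f(X,Y) = a over 𝔽_q, with f(X,Y) = (X+Y)^3 - 9XY^2, is non-singular: there is no point (α,β) ∈ 𝔽_q² with f(α,β) = a and both partial derivatives of f vanishing at (α,β). -/
theorem stmt_5 (q : ℕ) (hq : q.Prime) (hq3 : 3 < q) (a : ℤ) (ha : 0 < a) (haq : a < q) :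
    ¬ ∃ α β : ZMod q,
      (α + β)^3 - 9*α*β^2 = (a : ZMod q) ∧
      3*(α + β)^2 - 9*β^2 = 0 ∧
      3*(α + β)^2 - 18*α*β = 0 := by
  haveI : Fact q.Prime := ⟨hq⟩
  rintro ⟨α, β, hf, hx, hy⟩
  have h3 : (3 : ZMod q) ≠ 0 := by
    intro h
    have hd : q ∣ 3 := by
      have := (ZMod.natCast_eq_zero_iff 3 q).mp (by exact_mod_cast h)
      exact this
    have := Nat.le_of_dvd (by norm_num) hd
    omega
  have h9 : (9 : ZMod q) ≠ 0 := by
    intro h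
    apply h3
    have : (3 : ZMod q) * 3 = 0 := by linear_combination h
    rcases mul_eq_zero.mp this with h' | h' <;> exact h'
  have h90 : (9 : ZMod q) * (β * (β - 2*α)) = 0 := by linear_combination hy - hx
  have hb : β = 0 ∨ β = 2*α := by
    rcases mul_eq_zero.mp h90 with h | h
    · exact absurd h h9
    · rcases mul_eq_zero.mp h with h | h
      · exact Or.inl h
      · exact Or.inr (by linear_combination h)
  have hab : α = 0 ∧ β = 0 := by
    rcases hb with h | h
    · subst h
      have : (3 : ZMod q) * (α * α) = 0 := by linear_combination hx
      rcases mul_eq_zero.mp this with h' | h'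
      · exact absurd h' h3
      · rcases mul_eq_zero.mp h' with h'' | h'' <;> exact ⟨h'', rfl⟩
    · subst h
      have : (9 : ZMod q) * (α * α) = 0 := by linear_combination -hx
      rcases mul_eq_zero.mp this with h' | h'
      · exact absurd h' h9
      · rcases mul_eq_zero.mp h' with h'' | h''
        · exact ⟨h'', by rw [h'']; ring⟩
        · exact ⟨h'', by rw [h'']; ring⟩
  obtain ⟨ha0, hb0⟩ := hab
  rw [ha0, hb0] at hf
  have : (a : ZMod q) = 0 := by linear_combination -hf
  have hd : (q : ℤ) ∣ a := (ZMod.intCast_zmod_eq_zero_iff_dvd a q).mp this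
  have := Int.le_of_dvd ha hd
  omega
end

section
/- For every integer n, the number 2n(n+1)(n+2) is a sum of two rational cubes. -/
theorem stmt_8 (n : ℤ) :
    ∃ q₁ q₂ : ℚ, (2*n*(n + 1)*(n + 2) : ℤ) = q₁^3 + q₂^3 := by
  set m : ℚ := (n : ℚ) + 1 with hm
  refine ⟨(9*m^3 - 9*m^2 - 9*m + 1) / (3*(3*m^2 + 1)),
          (9*m^3 + 9*m^2 - 9*m - 1) / (3*(3*m^2 + 1)), ?_⟩
  have hd : (3*(3*m^2 + 1) : ℚ) ≠ 0 := by positivity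
  push_cast
  field_simp
  ring
end

section
/- For every integer n, the product n(n+1)(2n+1) is a sum of two rational cubes. -/
theorem stmt_9 (n : ℤ) :
    ∃ q₁ q₂ : ℚ, (n*(n + 1)*(2*n + 1) : ℤ) = q₁^3 + q₂^3 := by
  refine ⟨(9*(2*(n:ℚ)+1)^3 - 9*(2*(n:ℚ)+1)^2 - 9*(2*(n:ℚ)+1) + 1) /
      (6*(3*(2*(n:ℚ)+1)^2+1)),
    (9*(2*(n:ℚ)+1)^3 + 9*(2*(n:ℚ)+1)^2 - 9*(2*(n:ℚ)+1) - 1) /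
      (6*(3*(2*(n:ℚ)+1)^2+1)), ?_⟩
  have hd : (6*(3*(2*(n:ℚ)+1)^2+1)) ≠ 0 := by positivity
  push_cast
  field_simp
  ring
end

section
/- If p and q = p + 2 are twin primes, then 2pq is a sum of two rational cubes. -/
theorem stmt_11 (p : ℕ) (hp : p.Prime) (hq : (p + 2).Prime) :
    ∃ q₁ q₂ : ℚ, (2*p*(p + 2) : ℕ) = q₁^3 + q₂^3 := by
  refine ⟨((p:ℚ)^3+12*p^2+12*p-8)/(3*((p:ℚ)^2+2*p+4)),
          (-(p:ℚ)^3+6*p^2+24*p+8)/(3*((p:ℚ)^2+2*p+4)), ?_⟩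
  have h : (3*((p:ℚ)^2+2*p+4)) ≠ 0 := by positivity
  field_simp
  push_cast
  ring
end

section
/- For any three integers a, b, c, the integer (a−b)(b−c)(c−a) is a sum of two rational cubes. -/
/-! With `x = a - b` and `y = a - c` the integer is `x * y * (x - y)`, and over `ℚ` this form is a
sum of two cubes through an explicit rational parametrisation. -/

/-- Both cubed terms have denominator `3 * (x ^ 2 - x * y + y ^ 2)`; their sum is
`3 * x * y * (x - y) / (x ^ 2 - x * y + y ^ 2)` and `u ^ 2 - u * v + v ^ 2 = (x ^ 2 - x * y + y ^ 2) / 3`,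
so `u ^ 3 + v ^ 3 = (u + v) * (u ^ 2 - u * v + v ^ 2) = x * y * (x - y)`. -/
theorem exists_mul_mul_sub_eq_cube_add_cube {K : Type*} [Field K] [LinearOrder K]
    [IsStrictOrderedRing K] (x y : K) : ∃ u v : K, x * y * (x - y) = u ^ 3 + v ^ 3 := by
  rcases eq_or_ne x 0 with rfl | hx
  · exact ⟨0, 0, by simp⟩
  have hD : 0 < x ^ 2 - x * y + y ^ 2 := by
    nlinarith [sq_nonneg (x - 2 * y), sq_pos_of_ne_zero hx]
  refine ⟨(-x ^ 3 + 6 * x ^ 2 * y - 3 * x * y ^ 2 - y ^ 3) / (3 * (x ^ 2 - x * y + y ^ 2)),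
    (x ^ 3 + 3 * x ^ 2 * y - 6 * x * y ^ 2 + y ^ 3) / (3 * (x ^ 2 - x * y + y ^ 2)), ?_⟩
  rw [div_pow, div_pow, ← add_div, eq_div_iff (by positivity)]
  ring

theorem stmt_12 (a b c : ℤ) :
    ∃ q₁ q₂ : ℚ, ((a - b)*(b - c)*(c - a) : ℤ) = q₁^3 + q₂^3 := by
  obtain ⟨u, v, h⟩ := exists_mul_mul_sub_eq_cube_add_cube ((a : ℚ) - b) ((a : ℚ) - c)
  refine ⟨u, v, ?_⟩
  rw [← h]
  push_cast
  ring
end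

section
/- If (x, y) ∈ ℤ² satisfies Pell's equation x² − N y² = 1 for an integer N, then N x² y² is a sum of two rational cubes. -/
/-!
Over any field in which `3` is invertible, `g(X, Y) = X Y (X - Y)` is a sum of two cubes of
explicit rational functions of `X, Y` with denominator `3 (X² - X Y + Y²)`. Pell's equation gives
`N x² y² = x² (x² - 1) = g(x², 1)`, and `X² - X + 1 > 0` over `ℚ`.
-/

section CubeSum

variable {K : Type*} [Field K]

theorem mul_mul_sub_eq_add_cubes {X Y : K} (h3 : (3 : K) ≠ 0) (hQ : X ^ 2 - X * Y + Y ^ 2 ≠ 0) :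
    X * Y * (X - Y) =
      ((X ^ 3 + 3 * X ^ 2 * Y - 6 * X * Y ^ 2 + Y ^ 3) / (3 * (X ^ 2 - X * Y + Y ^ 2))) ^ 3 +
      ((-X ^ 3 + 6 * X ^ 2 * Y - 3 * X * Y ^ 2 - Y ^ 3) / (3 * (X ^ 2 - X * Y + Y ^ 2))) ^ 3 := by
  rw [div_pow, div_pow, ← add_div, eq_div_iff (pow_ne_zero 3 (mul_ne_zero h3 hQ))]
  ring

theorem exists_add_cubes_eq_mul_mul_sub {X Y : K} (h3 : (3 : K) ≠ 0)
    (hQ : X ^ 2 - X * Y + Y ^ 2 ≠ 0) : ∃ u v : K, X * Y * (X - Y) = u ^ 3 + v ^ 3 :=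
  ⟨_, _, mul_mul_sub_eq_add_cubes h3 hQ⟩

end CubeSum

theorem sq_sub_self_add_one_pos {R : Type*} [CommRing R] [LinearOrder R] [IsStrictOrderedRing R]
    (X : R) : 0 < X ^ 2 - X + 1 := by
  nlinarith [sq_nonneg (2 * X - 1)]

theorem exists_add_cubes_eq_mul_sub_one (X : ℚ) : ∃ u v : ℚ, X * (X - 1) = u ^ 3 + v ^ 3 := by
  have hQ : X ^ 2 - X * 1 + 1 ^ 2 ≠ 0 := by
    simpa using (sq_sub_self_add_one_pos X).ne'
  simpa using exists_add_cubes_eq_mul_mul_sub (Y := (1 : ℚ)) three_ne_zero hQ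

theorem stmt_14 (N x y : ℤ) (h : x^2 - N*y^2 = 1) :
    ∃ q₁ q₂ : ℚ, (N*x^2*y^2 : ℤ) = q₁^3 + q₂^3 := by
  have hg : N * x ^ 2 * y ^ 2 = x ^ 2 * (x ^ 2 - 1) := by linear_combination (-x ^ 2) * h
  rw [hg]
  push_cast
  exact exists_add_cubes_eq_mul_sub_one _
end

section
/- If x, y, z are positive rationals with x² + y² = z² (a rational right triangle), then x² y² z² is a sum of two rational cubes. -/
theorem stmt_15 (x y z : ℚ) (hx : 0 < x) (hy : 0 < y) (hz : 0 < z)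
    (h : x^2 + y^2 = z^2) :
    ∃ q₁ q₂ : ℚ, x^2*y^2*z^2 = q₁^3 + q₂^3 := by
  refine ⟨(-x^6 + 3*x^4*y^2 + 6*x^2*y^4 + y^6) / (3*(x^4 + x^2*y^2 + y^4)),
          (x^6 + 6*x^4*y^2 + 3*x^2*y^4 - y^6) / (3*(x^4 + x^2*y^2 + y^4)), ?_⟩
  have hd : (3*(x^4 + x^2*y^2 + y^4)) ≠ 0 := by positivity
  rw [← h]
  field_simp
  ring
end

section
/- Let u, v be nonzero coprime integers with 3 ∤ uv. Then the cubic polynomial G(T) = T³ − (3/(2u))(u−3v) T² − (3/(2u))(u+3v) T + 1 is irreducible over ℚ; equivalently 2uX³ − 3(u−3v)X²Y − 3(u+3v)XY² + 2uY³ is irreducible in ℚ[X,Y]. -/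
open Polynomial

lemma no_root (u v : ℤ) (hu : u ≠ 0) (hv : v ≠ 0)
    (h3u : ¬ (3:ℤ) ∣ u) (h3v : ¬ (3:ℤ) ∣ v) (x : ℚ)
    (hx : x^3 - (3*((u:ℚ) - 3*v))/(2*u) * x^2 - (3*((u:ℚ) + 3*v))/(2*u) * x + 1 = 0) :
    False := by
  set y : ℚ := x + 1 with hy
  obtain ⟨a, ha⟩ : ∃ a, a = y.num := ⟨_, rfl⟩
  obtain ⟨b, hb⟩ : ∃ b : ℤ, b = (y.den : ℤ) := ⟨_, rfl⟩
  have hbden : 0 < b := by rw [hb]; exact_mod_cast y.pos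
  have hb0 : (b:ℚ) ≠ 0 := by exact_mod_cast hbden.ne'
  have hyab : (y : ℚ) = (a : ℚ) / b := by rw [ha, hb]; exact_mod_cast (Rat.num_div_den y).symm
  have hu0 : (u:ℚ) ≠ 0 := Int.cast_ne_zero.2 hu
  have hx' : x = (a:ℚ)/b - 1 := by rw [← hyab, hy]; ring
  have key : ((2*u*a^3 - 9*(u-v)*a^2*b + 9*(u-3*v)*a*b^2 + 18*v*b^3 : ℤ) : ℚ) = 0 := by
    push_cast
    have hE2 : (2*(u:ℚ)*(b:ℚ)^3) * (x^3 - (3*((u:ℚ) - 3*v))/(2*u) * x^2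
        - (3*((u:ℚ) + 3*v))/(2*u) * x + 1)
      = 2*u*a^3 - 9*(u-v)*a^2*b + 9*(u-3*v)*a*b^2 + 18*v*b^3 := by
      rw [hx']; field_simp; ring
    linear_combination -hE2 + (2*(u:ℚ)*(b:ℚ)^3) * hx
  have keyZ : 2*u*a^3 - 9*(u-v)*a^2*b + 9*(u-3*v)*a*b^2 + 18*v*b^3 = 0 := by exact_mod_cast key
  have hp3 : Prime (3:ℤ) := Int.prime_three
  have h3a : (3:ℤ) ∣ a := by
    have : (3:ℤ) ∣ 2*u*a^3 := ⟨3*(u-v)*a^2*b - 3*(u-3*v)*a*b^2 - 6*v*b^3, by linarith⟩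
    rcases hp3.dvd_mul.1 this with h | h
    · rcases hp3.dvd_mul.1 h with h | h
      · omega
      · exact absurd h h3u
    · exact hp3.dvd_of_dvd_pow h
  obtain ⟨a', rfl⟩ := h3a
  have h3b : (3:ℤ) ∣ b := by
    have : (3:ℤ) ∣ 2*v*b^3 := ⟨-2*u*a'^3 + 3*(u-v)*a'^2*b - (u-3*v)*a'*b^2, by linarith⟩
    rcases hp3.dvd_mul.1 this with h | h
    · rcases hp3.dvd_mul.1 h with h | h
      · omega
      · exact absurd h h3v
    · exact hp3.dvd_of_dvd_pow h
  have hcop : Nat.Coprime y.num.natAbs y.den := y.reduced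
  have h1 : (3:ℕ) ∣ y.num.natAbs := by
    have : ((3:ℤ)) ∣ y.num := ha ▸ ⟨a', rfl⟩
    simpa using Int.natAbs_dvd_natAbs.mpr this
  have h2 : (3:ℕ) ∣ y.den := by
    have : (3:ℤ) ∣ (y.den : ℤ) := hb ▸ h3b
    exact_mod_cast this
  have := Nat.dvd_gcd h1 h2
  rw [Nat.Coprime] at hcop
  omega

open Polynomial in
theorem stmt_19 (u v : ℤ) (hu : u ≠ 0) (hv : v ≠ 0) (hcop : IsCoprime u v)
    (h3 : ¬ (3 ∣ u*v)) :
    Irreducible (X^3 - C ((3*((u : ℚ) - 3*v))/(2*u)) * X^2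
      - C ((3*((u : ℚ) + 3*v))/(2*u)) * X + 1 : ℚ[X]) := by
  set p : ℚ[X] := X^3 - C ((3*((u : ℚ) - 3*v))/(2*u)) * X^2
      - C ((3*((u : ℚ) + 3*v))/(2*u)) * X + 1 with hp
  have hmonic : p.Monic := by
    unfold p; monicity!
  have hdeg : p.natDegree = 3 := by
    unfold p; compute_degree!
  rw [hmonic.irreducible_iff_roots_eq_zero_of_degree_le_three (by omega) (by omega)]
  rw [Multiset.eq_zero_iff_forall_notMem]
  intro x hx
  rw [mem_roots hmonic.ne_zero] at hx
  have h3u : ¬ (3:ℤ) ∣ u := fun h => h3 (h.mul_right v)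
  have h3v : ¬ (3:ℤ) ∣ v := fun h => h3 (h.mul_left u)
  apply no_root u v hu hv h3u h3v x
  have := hx
  simp only [IsRoot, hp, eval_add, eval_sub, eval_mul, eval_pow, eval_X, eval_C, eval_one] at this
  linarith [this]
end
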